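/- arXiv:math/0107023 — 7 statements merged into one kernel-verified Lean document; each statement's English description precedes it below -/
import Mathlib

section
/- For every z ∈ Ξ, φ ∈ Φ and g ∈ Δ_z, the polynomial matrix G_z(φ,g) satisfies G_z(φ,g)(ω)·D·G_z(φ,g)(ω)* = D identically in ω, and G_z(φ,g)(0) = I; hence G_z(φ,g) ∈ M₀. -/
open Polynomial Matrix

noncomputable section

/-- The matrix `D = diag(-1,1,...,1)` of size `ν × ν` with `ν = n + 2`. -/
def Dm (n : ℕ) : Matrix (Fin (n + 2)) (Fin (n + 2)) ℂ :=
  Matrix.diagonal fun i => if i = 0 then -1 else 1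

/-- Coefficientwise complex conjugation of a scalar polynomial (`ω` treated as real). -/
def cstar (p : ℂ[X]) : ℂ[X] := p.map (starRingEnd ℂ)

/-- Polynomial matrices of size `(n+2) × (n+2)`. -/
abbrev PM (n : ℕ) := Matrix (Fin (n + 2)) (Fin (n + 2)) ℂ[X]

/-- `U(ω)* = Σ Uι* ωⁱ` : coefficientwise conjugate transpose of a polynomial matrix. -/
def Mstar (n : ℕ) (U : PM n) : PM n := Matrix.of fun i j => cstar (U j i)

/-- The scalar polynomial `g(ω)* h(ω)` for vector polynomials `g, h`. -/
def pdot (n : ℕ) (g h : Fin (n + 2) → ℂ[X]) : ℂ[X] := ∑ i, cstar (g i) * h i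

/-- `Ξ = {z : z₁ = 1, z* D z = 0}`. -/
def Xi (n : ℕ) : Set (Fin (n + 2) → ℂ) :=
  {z | z 0 = 1 ∧ star z ⬝ᵥ (Dm n).mulVec z = 0}

/-- `Δ_z⁰ = {d : d* z = d* D z = 0}`. -/
def Delta0 (n : ℕ) (z : Fin (n + 2) → ℂ) : Set (Fin (n + 2) → ℂ) :=
  {d | star d ⬝ᵥ z = 0 ∧ star d ⬝ᵥ (Dm n).mulVec z = 0}

/-- `Φ = {φ : φ(0) = 0, φ* = -φ}`. -/
def Phi : Set ℂ[X] := {φ | φ.eval 0 = 0 ∧ cstar φ = -φ}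

/-- `Δ_z` : vector polynomials vanishing at 0 with all coefficient vectors in `Δ_z⁰`. -/
def DeltaZ (n : ℕ) (z : Fin (n + 2) → ℂ) : Set (Fin (n + 2) → ℂ[X]) :=
  {g | (∀ i, (g i).eval 0 = 0) ∧ ∀ k : ℕ, (fun i => (g i).coeff k) ∈ Delta0 n z}

/-- `G_z(φ,g) = D·[z(φ - (1/2)g*g)z* + (zg* - gz*)] + I`. -/
def Gmat (n : ℕ) (z : Fin (n + 2) → ℂ) (φ : ℂ[X]) (g : Fin (n + 2) → ℂ[X]) : PM n :=
  (Dm n).map Polynomial.C *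
      Matrix.of (fun i j =>
        Polynomial.C (z i) * (φ - Polynomial.C (1 / 2 : ℂ) * pdot n g g) *
            Polynomial.C (star (z j)) +
          (Polynomial.C (z i) * cstar (g j) - g i * Polynomial.C (star (z j)))) +
    1

/-- `M` : the group of polynomial matrices with `U(ω) D U(ω)* = D`. -/
def MM (n : ℕ) : Set (PM n) :=
  {U | U * (Dm n).map Polynomial.C * Mstar n U = (Dm n).map Polynomial.C}

/-- `M₀ = {U ∈ M : U(0) = I}`. -/
def M0 (n : ℕ) : Set (PM n) :=
  {U | U ∈ MM n ∧ U.map (fun p => p.eval 0) = 1}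

/-- `M_z = {G_z(φ,g) : φ ∈ Φ, g ∈ Δ_z}`. -/
def Mz (n : ℕ) (z : Fin (n + 2) → ℂ) : Set (PM n) :=
  {U | ∃ φ ∈ Phi, ∃ g ∈ DeltaZ n z, U = Gmat n z φ g}

/-- `Ψ_z = {G_z(φ,0) : φ ∈ Φ}`. -/
def Psi (n : ℕ) (z : Fin (n + 2) → ℂ) : Set (PM n) :=
  {U | ∃ φ ∈ Phi, U = Gmat n z φ 0}

/-- Degree of a polynomial matrix: the largest `ι` with a nonzero coefficient `ω^ι`. -/
def degPM (n : ℕ) (U : PM n) : ℕ :=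
  Finset.univ.sup fun p : Fin (n + 2) × Fin (n + 2) => (U p.1 p.2).natDegree

lemma cstar_cstar' (p : ℂ[X]) : cstar (cstar p) = p := by
  ext k; simp [cstar, Polynomial.coeff_map]

lemma cstar_mul' (p q : ℂ[X]) : cstar (p * q) = cstar p * cstar q := by simp [cstar]
lemma cstar_add' (p q : ℂ[X]) : cstar (p + q) = cstar p + cstar q := by simp [cstar]
lemma cstar_sub' (p q : ℂ[X]) : cstar (p - q) = cstar p - cstar q := by simp [cstar]
lemma cstar_C' (a : ℂ) : cstar (Polynomial.C a) = Polynomial.C (star a) := by simp [cstar]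
lemma cstar_sum' {ι : Type*} {s : Finset ι} (f : ι → ℂ[X]) :
    cstar (∑ i ∈ s, f i) = ∑ i ∈ s, cstar (f i) := by simp [cstar, Polynomial.map_sum]
lemma cstar_eval0 (p : ℂ[X]) : (cstar p).eval 0 = star (p.eval 0) := by
  rw [← Polynomial.coeff_zero_eq_eval_zero, ← Polynomial.coeff_zero_eq_eval_zero, cstar,
    Polynomial.coeff_map]; rfl

/-- for `z ∈ Ξ`, `φ ∈ Φ`, `g ∈ Δ_z`, the matrix `G_z(φ,g)` satisfies
`G D G* = D` identically in `ω` and `G(0) = I`; hence `G_z(φ,g) ∈ M₀`. -/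
theorem stmt0 (n : ℕ) (z : Fin (n + 2) → ℂ) (hz : z ∈ Xi n)
    (φ : ℂ[X]) (hφ : φ ∈ Phi) (g : Fin (n + 2) → ℂ[X]) (hg : g ∈ DeltaZ n z) :
    Gmat n z φ g * (Dm n).map Polynomial.C * Mstar n (Gmat n z φ g) =
        (Dm n).map Polynomial.C ∧
      (Gmat n z φ g).map (fun p => p.eval 0) = 1 ∧
      Gmat n z φ g ∈ M0 n := by
  obtain ⟨hz0, hz2⟩ := hz
  obtain ⟨hφ0, hφs⟩ := hφ
  obtain ⟨hg0, hgk⟩ := hg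
  set d : Fin (n+2) → ℂ := fun i => if i = 0 then -1 else 1 with hd
  set q : ℂ[X] := φ - Polynomial.C (1/2 : ℂ) * pdot n g g with hqdef
  set A : PM n := Matrix.of (fun i j =>
      Polynomial.C (z i) * q * Polynomial.C (star (z j)) +
        (Polynomial.C (z i) * cstar (g j) - g i * Polynomial.C (star (z j)))) with hA
  have hdreal : ∀ i, star (d i) = d i := by
    intro i; simp only [hd]; split <;> simp
  have hdsq : ∀ i, d i * d i = 1 := by
    intro i; simp only [hd]; split <;> norm_num
  have hG : Gmat n z φ g = Matrix.diagonal (fun i => Polynomial.C (d i)) * A + 1 := by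
    rw [Gmat, Dm, Matrix.diagonal_map (by simp)]
  -- scalar hypotheses
  have hzsum : ∑ i, star (z i) * (d i * z i) = 0 := by
    have := hz2
    simpa [dotProduct, Dm, Matrix.mulVec_diagonal, hd] using this
  have hgz : ∀ m : ℕ, ∑ i, star ((g i).coeff m) * z i = 0 := by
    intro m
    have := (hgk m).1
    simpa [dotProduct] using this
  have hgDz : ∀ m : ℕ, ∑ i, star ((g i).coeff m) * (d i * z i) = 0 := by
    intro m
    have := (hgk m).2
    simpa [dotProduct, Dm, Matrix.mulVec_diagonal, hd] using this
  have hg0comp : g 0 = 0 := by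
    ext m
    have h1 := hgz m
    have h2 := hgDz m
    have h3 : ∑ i, (star ((g i).coeff m) * z i - star ((g i).coeff m) * (d i * z i)) = 0 := by
      rw [Finset.sum_sub_distrib, h1, h2, sub_zero]
    have h4 : ∀ i ∈ Finset.univ, star ((g i).coeff m) * z i - star ((g i).coeff m) * (d i * z i)
        = if i = (0 : Fin (n+2)) then 2 * star ((g (0:Fin (n+2))).coeff m) else 0 := by
      intro i _
      by_cases hi : i = 0
      · subst hi; simp only [hd, if_pos rfl, hz0, if_true]; ring
      · simp [hd, hi]
    rw [Finset.sum_congr rfl h4, Finset.sum_ite_eq' Finset.univ (0 : Fin (n+2))] at h3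
    simp only [Finset.mem_univ, if_true] at h3
    have h5 : star ((g (0:Fin (n+2))).coeff m) = 0 := by
      rcases mul_eq_zero.mp h3 with h | h
      · exact absurd h two_ne_zero
      · exact h
    simpa using congrArg star h5
  -- polynomial sum identities
  have e1 : ∑ k, d k * (star (z k) * z k) = 0 := by
    rw [← hzsum]; exact Finset.sum_congr rfl fun k _ => by ring
  have hS1 : ∑ k, Polynomial.C (d k) * (Polynomial.C (star (z k)) * Polynomial.C (z k)) = 0 := by
    simp only [← Polynomial.C_mul, ← map_sum]
    rw [e1, map_zero]
  have hS2 : ∑ k, Polynomial.C (d k) * (Polynomial.C (star (z k)) * g k) = 0 := by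
    ext m
    simp only [Polynomial.finset_sum_coeff, Polynomial.coeff_zero, ← mul_assoc,
      ← Polynomial.C_mul, Polynomial.coeff_C_mul]
    have h := congrArg star (hgDz m)
    simp only [star_sum, star_mul', star_star, star_zero, hdreal] at h
    rw [← h]
    exact Finset.sum_congr rfl fun k _ => by ring
  have hS3 : ∑ k, Polynomial.C (d k) * (cstar (g k) * Polynomial.C (z k)) = 0 := by
    ext m
    simp only [Polynomial.finset_sum_coeff, Polynomial.coeff_zero, Polynomial.coeff_C_mul,
      Polynomial.coeff_mul_C, cstar, Polynomial.coeff_map]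
    rw [← hgDz m]
    refine Finset.sum_congr rfl fun k _ => ?_
    rw [starRingEnd_apply]; ring
  have hS4 : ∑ k, Polynomial.C (d k) * (cstar (g k) * g k) = pdot n g g := by
    rw [pdot]
    refine Finset.sum_congr rfl fun k _ => ?_
    by_cases hk : k = 0
    · subst hk; simp [hg0comp, cstar]
    · simp [hd, hk]
  have hpd : cstar (pdot n g g) = pdot n g g := by
    rw [pdot, cstar_sum']
    refine Finset.sum_congr rfl fun i _ => ?_
    rw [cstar_mul', cstar_cstar', mul_comm]
  have hqq : q + cstar q = - pdot n g g := by
    rw [hqdef, cstar_sub', cstar_mul', cstar_C', hφs, hpd]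
    have h12 : star (1/2 : ℂ) = 1/2 := by norm_num
    rw [h12]
    have h2C : (2:ℂ[X]) * Polynomial.C (1/2:ℂ) = 1 := by
      rw [show (2:ℂ[X]) = Polynomial.C (2:ℂ) from by norm_cast, ← Polynomial.C_mul]
      norm_num
    linear_combination (-(pdot n g g)) * h2C
  -- the key scalar identity
  set u : Fin (n+2) → ℂ[X] := fun k => q * Polynomial.C (star (z k)) + cstar (g k) with hu
  set v : Fin (n+2) → ℂ[X] := fun k => cstar q * Polynomial.C (z k) + g k with hv
  have hAik : ∀ i k, A i k =
      Polynomial.C (z i) * u k - g i * Polynomial.C (star (z k)) := by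
    intro i k
    simp only [hA, Matrix.of_apply, hu]
    ring
  have hAstar : ∀ j k, cstar (A j k) =
      Polynomial.C (star (z j)) * v k - cstar (g j) * Polynomial.C (z k) := by
    intro j k
    rw [hAik, cstar_sub', cstar_mul', cstar_mul', cstar_C', cstar_C', star_star]
    simp only [hu, hv, cstar_add', cstar_mul', cstar_C', cstar_cstar', star_star]
  have hT2 : ∑ k, Polynomial.C (d k) * (u k * Polynomial.C (z k)) = 0 := by
    have e : ∀ k ∈ Finset.univ, Polynomial.C (d k) * (u k * Polynomial.C (z k)) =
        q * (Polynomial.C (d k) * (Polynomial.C (star (z k)) * Polynomial.C (z k))) +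
          Polynomial.C (d k) * (cstar (g k) * Polynomial.C (z k)) := by
      intro k _; simp only [hu]; ring
    rw [Finset.sum_congr rfl e, Finset.sum_add_distrib, ← Finset.mul_sum, hS1, hS3, mul_zero,
      add_zero]
  have hT3 : ∑ k, Polynomial.C (d k) * (Polynomial.C (star (z k)) * v k) = 0 := by
    have e : ∀ k ∈ Finset.univ, Polynomial.C (d k) * (Polynomial.C (star (z k)) * v k) =
        cstar q * (Polynomial.C (d k) * (Polynomial.C (star (z k)) * Polynomial.C (z k))) +
          Polynomial.C (d k) * (Polynomial.C (star (z k)) * g k) := by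
      intro k _; simp only [hv]; ring
    rw [Finset.sum_congr rfl e, Finset.sum_add_distrib, ← Finset.mul_sum, hS1, hS2, mul_zero,
      add_zero]
  have hT4 : ∑ k, Polynomial.C (d k) * (u k * v k) = pdot n g g := by
    have e : ∀ k ∈ Finset.univ, Polynomial.C (d k) * (u k * v k) =
        (q * cstar q) * (Polynomial.C (d k) * (Polynomial.C (star (z k)) * Polynomial.C (z k))) +
          (q * (Polynomial.C (d k) * (Polynomial.C (star (z k)) * g k)) +
            (cstar q * (Polynomial.C (d k) * (cstar (g k) * Polynomial.C (z k))) +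
              Polynomial.C (d k) * (cstar (g k) * g k))) := by
      intro k _; simp only [hu, hv]; ring
    rw [Finset.sum_congr rfl e, Finset.sum_add_distrib, Finset.sum_add_distrib,
      Finset.sum_add_distrib, ← Finset.mul_sum, ← Finset.mul_sum, ← Finset.mul_sum,
      hS1, hS2, hS3, hS4, mul_zero, mul_zero, mul_zero, zero_add, zero_add, zero_add]
  have key : ∀ i j, ∑ k, Polynomial.C (d k) * (A i k * cstar (A j k)) +
      (A i j + cstar (A j i)) = 0 := by
    intro i j
    have e : ∀ k ∈ Finset.univ, Polynomial.C (d k) * (A i k * cstar (A j k)) =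
        (Polynomial.C (z i) * Polynomial.C (star (z j))) * (Polynomial.C (d k) * (u k * v k)) -
          (Polynomial.C (z i) * cstar (g j)) * (Polynomial.C (d k) * (u k * Polynomial.C (z k))) -
          (g i * Polynomial.C (star (z j))) *
            (Polynomial.C (d k) * (Polynomial.C (star (z k)) * v k)) +
          (g i * cstar (g j)) *
            (Polynomial.C (d k) * (Polynomial.C (star (z k)) * Polynomial.C (z k))) := by
      intro k _
      rw [hAik, hAstar]
      ring
    rw [Finset.sum_congr rfl e, Finset.sum_add_distrib, Finset.sum_sub_distrib,
      Finset.sum_sub_distrib, ← Finset.mul_sum, ← Finset.mul_sum, ← Finset.mul_sum,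
      ← Finset.mul_sum, hT4, hT2, hT3, hS1, mul_zero, mul_zero, mul_zero, sub_zero, sub_zero,
      add_zero, hAik i j, hAstar j i]
    simp only [hu, hv]
    linear_combination (Polynomial.C (z i) * Polynomial.C (star (z j))) * hqq
  -- main matrix identity
  have hDc : (Dm n).map Polynomial.C = Matrix.diagonal (fun i => Polynomial.C (d i)) := by
    rw [Dm, Matrix.diagonal_map (by simp)]
  have goal1 : Gmat n z φ g * (Dm n).map Polynomial.C * Mstar n (Gmat n z φ g) =
      (Dm n).map Polynomial.C := by
    rw [hDc, hG]
    rw [← Matrix.ext_iff]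
    intro i j
    rw [Matrix.mul_apply]
    have entry1 : ∀ k, ((Matrix.diagonal (fun i => Polynomial.C (d i)) * A + 1) *
        Matrix.diagonal (fun i => Polynomial.C (d i))) i k =
        (Polynomial.C (d i) * A i k + (if i = k then 1 else 0)) * Polynomial.C (d k) := by
      intro k
      rw [Matrix.mul_diagonal, Matrix.add_apply, Matrix.diagonal_mul, Matrix.one_apply]
    have entry2 : ∀ k, Mstar n (Matrix.diagonal (fun i => Polynomial.C (d i)) * A + 1) k j =
        Polynomial.C (d j) * cstar (A j k) + (if j = k then 1 else 0) := by
      intro k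
      rw [Mstar, Matrix.of_apply, Matrix.add_apply, Matrix.diagonal_mul, Matrix.one_apply,
        cstar_add', cstar_mul', cstar_C', hdreal]
      congr 1
      split <;> simp [cstar]
    have e3 : ∀ k ∈ Finset.univ, ((Matrix.diagonal (fun i => Polynomial.C (d i)) * A + 1) *
        Matrix.diagonal (fun i => Polynomial.C (d i))) i k *
        Mstar n (Matrix.diagonal (fun i => Polynomial.C (d i)) * A + 1) k j =
        (Polynomial.C (d i) * Polynomial.C (d j)) *
            (Polynomial.C (d k) * (A i k * cstar (A j k))) +
          (if j = k then Polynomial.C (d i) * A i k * Polynomial.C (d k) else 0) +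
          (if i = k then Polynomial.C (d k) * (Polynomial.C (d j) * cstar (A j k)) else 0) +
          (if i = k then (if j = k then Polynomial.C (d k) else 0) else 0) := by
      intro k _
      rw [entry1 k, entry2 k]
      by_cases h1 : i = k <;> by_cases h2 : j = k
      · simp only [if_pos h1, if_pos h2]; ring
      · simp only [if_pos h1, if_neg h2]; ring
      · simp only [if_neg h1, if_pos h2]; ring
      · simp only [if_neg h1, if_neg h2]; ring
    rw [Finset.sum_congr rfl e3, Finset.sum_add_distrib, Finset.sum_add_distrib,
      Finset.sum_add_distrib, ← Finset.mul_sum, Finset.sum_ite_eq, Finset.sum_ite_eq,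
      Finset.sum_ite_eq, Matrix.diagonal_apply]
    simp only [Finset.mem_univ, if_true]
    have hsum := key i j
    by_cases hij : i = j
    · subst hij
      simp only [if_pos rfl, if_true]
      linear_combination (Polynomial.C (d i) * Polynomial.C (d i)) * hsum
    · rw [if_neg (fun h => hij h.symm), if_neg hij]
      linear_combination (Polynomial.C (d i) * Polynomial.C (d j)) * hsum
  -- value at zero
  have hpd0 : (pdot n g g).eval 0 = 0 := by
    rw [pdot, Polynomial.eval_finset_sum]
    exact Finset.sum_eq_zero fun i _ => by rw [Polynomial.eval_mul, hg0 i, mul_zero]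
  have hA0 : ∀ i j, (A i j).eval 0 = 0 := by
    intro i j
    simp [hA, hqdef, Polynomial.eval_mul, Polynomial.eval_add, Polynomial.eval_sub,
      hφ0, hpd0, cstar_eval0, hg0]
  have goal2 : (Gmat n z φ g).map (fun p => p.eval 0) = 1 := by
    rw [hG]
    rw [← Matrix.ext_iff]
    intro i j
    rw [Matrix.map_apply, Matrix.add_apply, Matrix.diagonal_mul, Polynomial.eval_add,
      Polynomial.eval_mul, hA0, mul_zero, zero_add]
    by_cases hij : i = j
    · subst hij; simp [Matrix.one_apply]
    · simp [Matrix.one_apply, hij]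
  exact ⟨goal1, goal2, goal1, goal2⟩
end
end

section
/- For every z ∈ Ξ, φ, ψ ∈ Φ and g, h ∈ Δ_z, one has the multiplication rule G_z(φ,g) · G_z(ψ,h) = G_z(φ + ψ + (1/2)(h*g − g*h), g + h), where h*g and g*h denote the scalar polynomials h(ω)*g(ω) and g(ω)*h(ω). -/
open Polynomial Matrix

noncomputable section

/-! Write `G_z(φ,g) = D K + I` with `K = z (α z* + g*) - g z*` and `α = φ - g*g/2`. Then
`(D K + I)(D L + I) = D (K D L + K + L) + I`, and `K` is additive in `(α, g)`. Every term of `K D L`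
pairs one of `z*, g*` with one of `z, h` through `D`; the relations `z*Dz = 0`, `g*Dz = 0` and
`z*Dh = 0` kill all of them except `g*Dh`, which equals `g*h` because `g₁ = 0`. So
`K D L = -(g*h) z z*`, and what is left is a scalar identity for `α`. -/

section gCore

variable {R ι : Type*} [CommRing R]

/-- `z (α z* + g*) - g z*`, with the conjugates `z*`, `g*` passed as the vectors `Zs`, `gs`. -/
def gCore (Z Zs : ι → R) (α : R) (g gs : ι → R) : Matrix ι ι R :=
  vecMulVec Z (α • Zs + gs) - vecMulVec g Zs

lemma gCore_add (Z Zs : ι → R) (α β : R) (g gs h hs : ι → R) :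
    gCore Z Zs α g gs + gCore Z Zs β h hs = gCore Z Zs (α + β) (g + h) (gs + hs) := by
  simp only [gCore, add_smul, vecMulVec_add, add_vecMulVec]
  abel

variable [Fintype ι]

lemma gCore_mul_mul_gCore {A : Matrix ι ι R} {Z Zs g gs h hs : ι → R} (α β : R)
    (hZZ : Zs ᵥ* A ⬝ᵥ Z = 0) (hgZ : gs ᵥ* A ⬝ᵥ Z = 0) (hZh : Zs ᵥ* A ⬝ᵥ h = 0) :
    gCore Z Zs α g gs * A * gCore Z Zs β h hs = gCore Z Zs (-(gs ᵥ* A ⬝ᵥ h)) 0 0 := by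
  simp only [gCore, sub_mul, mul_sub, vecMulVec_mul, vecMul_vecMulVec, add_vecMul,
    smul_vecMul, add_dotProduct, smul_dotProduct, hZZ, hgZ, hZh, smul_zero, zero_add, add_zero,
    zero_smul, vecMulVec_zero, sub_zero, zero_vecMulVec, neg_smul, vecMulVec_neg, zero_sub]

end gCore

lemma mul_add_one_mul_mul_add_one {S : Type*} [Ring S] (A M N : S) :
    (A * M + 1) * (A * N + 1) = A * (M * A * N + M + N) + 1 := by
  noncomm_ring

section CoeffC

variable {R ι : Type*} [CommSemiring R] [Fintype ι]

lemma comp_C_vecMul_map_C (u : ι → R) (M : Matrix ι ι R) : (C ∘ u) ᵥ* M.map C = C ∘ (u ᵥ* M) :=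
  funext fun i => (RingHom.map_vecMul C M u i).symm

lemma map_C_mulVec_comp_C (M : Matrix ι ι R) (u : ι → R) : M.map C *ᵥ (C ∘ u) = C ∘ (M *ᵥ u) :=
  funext fun i => (RingHom.map_mulVec C M u i).symm

lemma coeff_dotProduct_comp_C (v : ι → R[X]) (w : ι → R) (m : ℕ) :
    (v ⬝ᵥ C ∘ w).coeff m = (fun i => (v i).coeff m) ⬝ᵥ w := by
  simp only [dotProduct, finsetSum_coeff, Function.comp_apply, coeff_mul_C]

end CoeffC

def cstarVec {ι : Type*} (v : ι → ℂ[X]) : ι → ℂ[X] := fun i => cstar (v i)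

section CstarVec

variable {ι : Type*}

lemma cstarVec_add (v w : ι → ℂ[X]) : cstarVec (v + w) = cstarVec v + cstarVec w :=
  funext fun _ => Polynomial.map_add _

lemma cstarVec_comp_C (z : ι → ℂ) : cstarVec (C ∘ z) = C ∘ star z :=
  funext fun i => by simp [cstarVec, cstar]

lemma coeff_cstarVec (v : ι → ℂ[X]) (m : ℕ) :
    (fun i => (cstarVec v i).coeff m) = star fun i => (v i).coeff m :=
  funext fun i => by simp [cstarVec, cstar]

lemma pdot_eq_cstarVec_dotProduct (n : ℕ) (g h : Fin (n + 2) → ℂ[X]) :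
    pdot n g h = cstarVec g ⬝ᵥ h :=
  rfl

end CstarVec

variable {n : ℕ}

lemma Dm_isHermitian : (Dm n).IsHermitian := by
  refine isHermitian_diagonal_of_self_adjoint _ (funext fun i => ?_)
  split_ifs <;> simp [*]

lemma Gmat_eq_gCore (z : Fin (n + 2) → ℂ) (φ : ℂ[X]) (g : Fin (n + 2) → ℂ[X]) :
    Gmat n z φ g = (Dm n).map C *
      gCore (C ∘ z) (cstarVec (C ∘ z)) (φ - C (1 / 2 : ℂ) * pdot n g g) g (cstarVec g) + 1 := by
  unfold Gmat
  congr 2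
  refine Matrix.ext fun i j => ?_
  simp only [gCore, cstarVec_comp_C, Matrix.sub_apply, vecMulVec_apply, of_apply,
    Function.comp_apply, Pi.add_apply, Pi.smul_apply, Pi.star_apply, smul_eq_mul, cstarVec]
  ring

lemma Delta0.apply_zero {z d : Fin (n + 2) → ℂ} (hz : z 0 = 1) (hd : d ∈ Delta0 n z) :
    d 0 = 0 := by
  have hdiff : star d ⬝ᵥ z - star d ⬝ᵥ Dm n *ᵥ z = star (d 0) * 2 := by
    rw [← dotProduct_sub, dotProduct, Finset.sum_eq_single 0]
    · simp only [Pi.sub_apply, Dm, mulVec_diagonal, if_pos, hz, Pi.star_apply]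
      ring
    · intro k _ hk
      simp [Dm, mulVec_diagonal, hk]
    · simp
  rw [hd.1, hd.2, sub_zero, eq_comm, mul_eq_zero] at hdiff
  simpa using hdiff

lemma DeltaZ.apply_zero {z : Fin (n + 2) → ℂ} {g : Fin (n + 2) → ℂ[X]} (hz : z ∈ Xi n)
    (hg : g ∈ DeltaZ n z) : g 0 = 0 :=
  Polynomial.ext fun m => Delta0.apply_zero hz.1 (hg.2 m)

lemma Xi.star_D_self_eq_zero {z : Fin (n + 2) → ℂ} (hz : z ∈ Xi n) :
    cstarVec (C ∘ z) ᵥ* (Dm n).map C ⬝ᵥ C ∘ z = 0 := by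
  rw [cstarVec_comp_C, comp_C_vecMul_map_C, ← RingHom.map_dotProduct, ← dotProduct_mulVec, hz.2,
    map_zero]

lemma DeltaZ.star_D_C_eq_zero {z : Fin (n + 2) → ℂ} {g : Fin (n + 2) → ℂ[X]}
    (hg : g ∈ DeltaZ n z) : cstarVec g ᵥ* (Dm n).map C ⬝ᵥ C ∘ z = 0 := by
  ext m
  rw [← dotProduct_mulVec, map_C_mulVec_comp_C, coeff_dotProduct_comp_C, coeff_cstarVec,
    (hg.2 m).2, coeff_zero]

lemma DeltaZ.C_star_D_eq_zero {z : Fin (n + 2) → ℂ} {h : Fin (n + 2) → ℂ[X]}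
    (hh : h ∈ DeltaZ n z) : cstarVec (C ∘ z) ᵥ* (Dm n).map C ⬝ᵥ h = 0 := by
  ext m
  have hconj : star z ᵥ* Dm n ⬝ᵥ (fun i => (h i).coeff m) = 0 := by
    have hd := (hh.2 m).2
    rwa [star_dotProduct, star_mulVec, Dm_isHermitian.eq, star_eq_zero] at hd
  rw [cstarVec_comp_C, comp_C_vecMul_map_C, dotProduct_comm, coeff_dotProduct_comp_C,
    dotProduct_comm, hconj, coeff_zero]

lemma star_D_eq_pdot {g : Fin (n + 2) → ℂ[X]} (hg : g 0 = 0) (h : Fin (n + 2) → ℂ[X]) :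
    cstarVec g ᵥ* (Dm n).map C ⬝ᵥ h = pdot n g h := by
  have hD : cstarVec g ᵥ* (Dm n).map C = cstarVec g := by
    ext1 i
    rw [Dm, diagonal_map (map_zero C), vecMul_diagonal]
    by_cases hi : i = 0
    · simp [hi, hg, cstarVec, cstar]
    · simp [hi]
  rw [hD, pdot_eq_cstarVec_dotProduct]

theorem stmt1_general (n : ℕ) (z : Fin (n + 2) → ℂ) (hz : z ∈ Xi n)
    (φ ψ : ℂ[X])
    (g h : Fin (n + 2) → ℂ[X]) (hg : g ∈ DeltaZ n z) (hh : h ∈ DeltaZ n z) :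
    Gmat n z φ g * Gmat n z ψ h =
      Gmat n z (φ + ψ + Polynomial.C (1 / 2 : ℂ) * (pdot n h g - pdot n g h)) (g + h) := by
  simp only [Gmat_eq_gCore]
  rw [mul_add_one_mul_mul_add_one, gCore_mul_mul_gCore _ _ (Xi.star_D_self_eq_zero hz)
    (DeltaZ.star_D_C_eq_zero hg) (DeltaZ.C_star_D_eq_zero hh),
    star_D_eq_pdot (DeltaZ.apply_zero hz hg), gCore_add, gCore_add, cstarVec_add, zero_add,
    zero_add]
  congr 3
  have hhalf : C (1 / 2 : ℂ) * 2 = 1 := by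
    rw [← C_ofNat, ← C_mul]
    norm_num
  simp only [pdot_eq_cstarVec_dotProduct, cstarVec_add, add_dotProduct, dotProduct_add]
  linear_combination (cstarVec g ⬝ᵥ h) * hhalf

/-- the multiplication rule
`G_z(φ,g) · G_z(ψ,h) = G_z(φ + ψ + (1/2)(h*g − g*h), g + h)`. -/
theorem stmt1 (n : ℕ) (z : Fin (n + 2) → ℂ) (hz : z ∈ Xi n)
    (φ ψ : ℂ[X]) (hφ : φ ∈ Phi) (hψ : ψ ∈ Phi)
    (g h : Fin (n + 2) → ℂ[X]) (hg : g ∈ DeltaZ n z) (hh : h ∈ DeltaZ n z) :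
    Gmat n z φ g * Gmat n z ψ h =
      Gmat n z (φ + ψ + Polynomial.C (1 / 2 : ℂ) * (pdot n h g - pdot n g h)) (g + h) :=
  stmt1_general n z hz φ ψ g h hg hh
end
end

section
/- (Theorem 1, statement 4, degree additivity.) If U = G_{z₁}(φ₁,g₁) · … · G_{z_η}(φ_η,g_η), where η ≥ 1, z_ι ∈ Ξ, φ_ι ∈ Φ, g_ι ∈ Δ_{z_ι}, each (φ_ι,g_ι) ≠ (0,0), and z_ι ≠ z_{ι+1} for ι = 1,…,η−1, then deg U = Σ_{ι=1}^{η} deg G_{z_ι}(φ_ι,g_ι) = Σ_{ι=1}^{η} deg(φ_ι − g_ι*g_ι), where deg denotes the degree of a polynomial matrix (the largest ι with nonzero coefficient of ω^ι). -/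
open Polynomial Matrix

noncomputable section

/-!
The coefficient of top degree `M = max (deg φ, deg g*g)` of `G_z(φ,g)` is `c • D z z*` with
`c ≠ 0`: the coefficients of `φ` are imaginary and those of `g*g` real, so the leading terms of
`φ` and `-½ g*g` cannot cancel, and `g` itself has degree `< M`. Rank-one matrices multiply as
`(D z z*)(D w w*) = (z* D w) • D z w*`, and `z* D w ≠ 0` for distinct `z, w ∈ Ξ` by the equality
case of Cauchy–Schwarz, so the top coefficients of the factors of an alternating product
multiply to a nonzero matrix and the degrees add up.
-/

lemma cstar_coeff (p : ℂ[X]) (k : ℕ) : (cstar p).coeff k = starRingEnd ℂ (p.coeff k) :=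
  coeff_map _ _

lemma natDegree_cstar (p : ℂ[X]) : (cstar p).natDegree = p.natDegree :=
  natDegree_map_eq_of_injective (starRingEnd ℂ).injective p

lemma cstar_pdot_self (n : ℕ) (g : Fin (n + 2) → ℂ[X]) : cstar (pdot n g g) = pdot n g g := by
  simp only [pdot, cstar, Polynomial.map_sum, Polynomial.map_mul, Polynomial.map_map,
    RingHomCompTriple.comp_eq, Polynomial.map_id, mul_comm]

lemma coeff_eq_zero_of_coeff_add_eq_zero {p q : ℂ[X]} (hp : cstar p = -p) (hq : cstar q = q)
    {k : ℕ} (h : (p + q).coeff k = 0) : p.coeff k = 0 ∧ q.coeff k = 0 := by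
  have hp' : starRingEnd ℂ (p.coeff k) = -p.coeff k := by
    rw [← cstar_coeff, hp, coeff_neg]
  have hq' : starRingEnd ℂ (q.coeff k) = q.coeff k := by rw [← cstar_coeff, hq]
  rw [coeff_add] at h
  have h' := congrArg (starRingEnd ℂ) h
  rw [map_add, hp', hq', map_zero] at h'
  exact ⟨by linear_combination (h - h') / 2, by linear_combination (h + h') / 2⟩

lemma natDegree_add_eq_max_of_cstar {p q : ℂ[X]} (hp : cstar p = -p) (hq : cstar q = q) :
    (p + q).natDegree = max p.natDegree q.natDegree := by
  refine le_antisymm (natDegree_add_le p q) (max_le ?_ ?_)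
  · rcases eq_or_ne p 0 with rfl | hp0
    · simp
    refine le_natDegree_of_ne_zero fun h => hp0 ?_
    exact leadingCoeff_eq_zero.mp (coeff_eq_zero_of_coeff_add_eq_zero hp hq h).1
  · rcases eq_or_ne q 0 with rfl | hq0
    · simp
    refine le_natDegree_of_ne_zero fun h => hq0 ?_
    exact leadingCoeff_eq_zero.mp (coeff_eq_zero_of_coeff_add_eq_zero hp hq h).2

lemma natDegree_sub_C_mul_eq_max {p q : ℂ[X]} (hp : cstar p = -p) (hq : cstar q = q) {t : ℝ}
    (ht : t ≠ 0) : (p - C (t : ℂ) * q).natDegree = max p.natDegree q.natDegree := by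
  have htq : cstar (-(C (t : ℂ) * q)) = -(C (t : ℂ) * q) := by
    rw [cstar, Polynomial.map_neg, Polynomial.map_mul, map_C, Complex.conj_ofReal]
    exact congrArg (fun r => -(C (t : ℂ) * r)) hq
  rw [sub_eq_add_neg, natDegree_add_eq_max_of_cstar hp htq, natDegree_neg,
    natDegree_C_mul (by exact_mod_cast ht)]

lemma natDegree_pdot_self (n : ℕ) (g : Fin (n + 2) → ℂ[X]) :
    (pdot n g g).natDegree = 2 * Finset.univ.sup fun i => (g i).natDegree := by
  set m := Finset.univ.sup fun i => (g i).natDegree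
  have hle : ∀ i, (g i).natDegree ≤ m := fun i =>
    Finset.le_sup (f := fun i => (g i).natDegree) (Finset.mem_univ i)
  refine le_antisymm (natDegree_sum_le_of_forall_le _ _ fun i _ => ?_) ?_
  · refine natDegree_mul_le.trans ?_
    rw [natDegree_cstar]
    linarith [hle i]
  rcases Nat.eq_zero_or_pos m with hm | hm
  · simp [hm]
  obtain ⟨i₀, -, hi₀⟩ : ∃ i ∈ Finset.univ, m = (g i).natDegree :=
    Finset.exists_mem_eq_sup _ Finset.univ_nonempty _
  have hg₀ : (g i₀).coeff m ≠ 0 := by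
    rw [hi₀]
    refine mt leadingCoeff_eq_zero.mp fun h => ?_
    rw [h, natDegree_zero] at hi₀
    omega
  have htop : (pdot n g g).coeff (2 * m) = ∑ i, (Complex.normSq ((g i).coeff m) : ℂ) := by
    simp only [pdot, finsetSum_coeff, two_mul]
    refine Finset.sum_congr rfl fun i _ => ?_
    rw [coeff_mul_add_eq_of_natDegree_le ((natDegree_cstar _).trans_le (hle i)) (hle i),
      cstar_coeff, Complex.normSq_eq_conj_mul_self]
  refine le_natDegree_of_ne_zero ?_
  rw [htop]
  exact_mod_cast (Finset.sum_pos' (f := fun i => Complex.normSq ((g i).coeff m))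
    (fun i _ => Complex.normSq_nonneg _)
    ⟨i₀, Finset.mem_univ _, Complex.normSq_pos.mpr hg₀⟩).ne'

lemma natDegree_sub_half_mul_pdot {n : ℕ} {φ : ℂ[X]} (hφ : cstar φ = -φ)
    (g : Fin (n + 2) → ℂ[X]) :
    (φ - C (1 / 2 : ℂ) * pdot n g g).natDegree = max φ.natDegree (pdot n g g).natDegree := by
  simpa using natDegree_sub_C_mul_eq_max hφ (cstar_pdot_self n g) (t := 1 / 2) (by norm_num)

lemma natDegree_sub_pdot {n : ℕ} {φ : ℂ[X]} (hφ : cstar φ = -φ) (g : Fin (n + 2) → ℂ[X]) :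
    (φ - pdot n g g).natDegree = max φ.natDegree (pdot n g g).natDegree := by
  simpa using natDegree_sub_C_mul_eq_max hφ (cstar_pdot_self n g) one_ne_zero

lemma natDegree_pos_of_eval_zero {p : ℂ[X]} (hp : p ≠ 0) (h0 : p.eval 0 = 0) :
    0 < p.natDegree :=
  natDegree_pos_of_eval₂_root hp (RingHom.id ℂ) h0 fun _ => id

-- `deg g*g = 2 max deg gᵢ`, and a nonzero `g` vanishing at `0` has positive degree.
lemma natDegree_lt_max_natDegree_pdot (n : ℕ) {φ : ℂ[X]} {g : Fin (n + 2) → ℂ[X]}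
    (hφ0 : φ.eval 0 = 0) (hg0 : ∀ i, (g i).eval 0 = 0) (hnt : ¬(φ = 0 ∧ g = 0))
    (j : Fin (n + 2)) : (g j).natDegree < max φ.natDegree (pdot n g g).natDegree := by
  rw [natDegree_pdot_self]
  set m := Finset.univ.sup fun i => (g i).natDegree
  have hgj : (g j).natDegree ≤ m :=
    Finset.le_sup (f := fun i => (g i).natDegree) (Finset.mem_univ j)
  rcases Nat.eq_zero_or_pos m with hm | hm
  · have hg : g = 0 := funext fun i => by
      by_contra hgi
      have := Finset.le_sup (f := fun i => (g i).natDegree) (Finset.mem_univ i)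
      have := natDegree_pos_of_eval_zero hgi (hg0 i)
      omega
    have := natDegree_pos_of_eval_zero (fun hφ => hnt ⟨hφ, hg⟩) hφ0
    omega
  · omega

lemma Dm_mulVec_apply (n : ℕ) (w : Fin (n + 2) → ℂ) (i : Fin (n + 2)) :
    (Dm n *ᵥ w) i = (if i = 0 then -1 else 1) * w i := by
  simp [Dm, mulVec_diagonal]

lemma Dm_mulVec_ne_zero {n : ℕ} {z : Fin (n + 2) → ℂ} (hz : z ≠ 0) : Dm n *ᵥ z ≠ 0 :=
  fun h => hz (funext fun i => by
    have := congrFun h i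
    rw [Dm_mulVec_apply] at this
    split_ifs at this <;> simpa using this)

lemma ne_zero_of_mem_Xi {n : ℕ} {z : Fin (n + 2) → ℂ} (hz : z ∈ Xi n) : z ≠ 0 :=
  fun h => by simpa [h] using hz.1

lemma star_dotProduct_Dm_mulVec (n : ℕ) (z w : Fin (n + 2) → ℂ) :
    star z ⬝ᵥ (Dm n *ᵥ w) = -(star (z 0) * w 0) +
      inner ℂ (WithLp.toLp 2 (Fin.tail z) : EuclideanSpace ℂ (Fin (n + 1)))
        (WithLp.toLp 2 (Fin.tail w)) := by
  simp [dotProduct, Fin.sum_univ_succ, Dm_mulVec_apply, Fin.succ_ne_zero, PiLp.inner_apply,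
    Fin.tail, mul_comm]

lemma norm_tail_of_mem_Xi {n : ℕ} {z : Fin (n + 2) → ℂ} (hz : z ∈ Xi n) :
    ‖(WithLp.toLp 2 (Fin.tail z) : EuclideanSpace ℂ (Fin (n + 1)))‖ = 1 := by
  obtain ⟨hz0, hzD⟩ := hz
  rw [star_dotProduct_Dm_mulVec, hz0, star_one, one_mul, neg_add_eq_zero,
    inner_self_eq_norm_sq_to_K] at hzD
  have hsq := congrArg Complex.re hzD.symm
  simp only [Complex.one_re] at hsq
  exact (pow_eq_one_iff_of_nonneg (norm_nonneg _) two_ne_zero).mp (by exact_mod_cast hsq)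

-- The tails of `z` and `w` are unit vectors, so `z* D w = 0` is the equality case of
-- Cauchy–Schwarz.
lemma star_dotProduct_Dm_mulVec_ne_zero {n : ℕ} {z w : Fin (n + 2) → ℂ} (hz : z ∈ Xi n)
    (hw : w ∈ Xi n) (hzw : z ≠ w) : star z ⬝ᵥ (Dm n *ᵥ w) ≠ 0 := by
  intro h
  rw [star_dotProduct_Dm_mulVec, hz.1, hw.1, star_one, one_mul, neg_add_eq_zero] at h
  have htail := (inner_eq_one_iff_of_norm_eq_one (norm_tail_of_mem_Xi hz)
    (norm_tail_of_mem_Xi hw)).mp h.symm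
  refine hzw ?_
  rw [← Fin.cons_self_tail z, ← Fin.cons_self_tail w, hz.1, hw.1]
  exact congrArg (Fin.cons 1) (congrArg WithLp.ofLp htail)

lemma coeff_matPolyEquiv_Gmat (n : ℕ) (z : Fin (n + 2) → ℂ) (φ : ℂ[X])
    (g : Fin (n + 2) → ℂ[X]) {k : ℕ} (hk : k ≠ 0) (hgk : ∀ i, (g i).coeff k = 0) :
    (matPolyEquiv (Gmat n z φ g)).coeff k =
      vecMulVec ((φ - C (1 / 2 : ℂ) * pdot n g g).coeff k • Dm n *ᵥ z) (star z) := by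
  ext i j
  rw [matPolyEquiv_coeff_apply]
  have hδ : ((1 : PM n) i j).coeff k = 0 := by
    rw [one_apply]
    split_ifs <;> simp [coeff_one, hk]
  simp only [Gmat, Dm, diagonal_map (map_zero C), diagonal_mul, Matrix.add_apply, of_apply,
    coeff_add, hδ, add_zero, coeff_C_mul, coeff_sub, coeff_mul_C, cstar_coeff, hgk, map_zero,
    mul_zero, zero_mul, sub_zero, vecMulVec_apply, mulVec_diagonal, Pi.smul_apply, smul_eq_mul,
    Pi.star_apply]
  ring

lemma matPolyEquiv_Gmat {n : ℕ} {z : Fin (n + 2) → ℂ} {φ : ℂ[X]} {g : Fin (n + 2) → ℂ[X]}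
    (hz : z ≠ 0) (hφ : φ ∈ Phi) (hg : ∀ i, (g i).eval 0 = 0) (hnt : ¬(φ = 0 ∧ g = 0)) :
    (matPolyEquiv (Gmat n z φ g)).natDegree = max φ.natDegree (pdot n g g).natDegree ∧
      ∃ c : ℂ, c ≠ 0 ∧
        (matPolyEquiv (Gmat n z φ g)).leadingCoeff = c • vecMulVec (Dm n *ᵥ z) (star z) := by
  set q := φ - C (1 / 2 : ℂ) * pdot n g g
  set M := max φ.natDegree (pdot n g g).natDegree
  have hq : q.natDegree = M := natDegree_sub_half_mul_pdot hφ.2 g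
  have hgM := natDegree_lt_max_natDegree_pdot n hφ.1 hg hnt
  have hM : 0 < M := (Nat.zero_le _).trans_lt (hgM 0)
  have hcoeff : ∀ k, M ≤ k → (matPolyEquiv (Gmat n z φ g)).coeff k =
      vecMulVec (q.coeff k • Dm n *ᵥ z) (star z) := fun k hk =>
    coeff_matPolyEquiv_Gmat n z φ g (hM.trans_le hk).ne'
      fun i => coeff_eq_zero_of_natDegree_lt ((hgM i).trans_le hk)
  have hq0 : q.leadingCoeff ≠ 0 := mt leadingCoeff_eq_zero.mp (ne_zero_of_natDegree_gt (hq ▸ hM))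
  have htop : (matPolyEquiv (Gmat n z φ g)).coeff M ≠ 0 := by
    rw [hcoeff M le_rfl, ← hq]
    exact vecMulVec_ne_zero (smul_ne_zero hq0 (Dm_mulVec_ne_zero hz)) (star_ne_zero.mpr hz)
  have hdeg : (matPolyEquiv (Gmat n z φ g)).natDegree = M := by
    refine natDegree_eq_of_le_of_coeff_ne_zero ?_ htop
    refine natDegree_le_iff_coeff_eq_zero.mpr fun k hk => ?_
    rw [hcoeff k hk.le, coeff_eq_zero_of_natDegree_lt (hq.trans_lt hk), zero_smul,
      zero_vecMulVec]
  refine ⟨hdeg, q.leadingCoeff, hq0, ?_⟩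
  rw [leadingCoeff, hdeg, hcoeff M le_rfl, ← hq, smul_vecMulVec]
  rfl

theorem natDegree_prod_ofFn_of_leadingCoeff_eq_smul_vecMulVec {K ι : Type*} [Field K]
    [Fintype ι] [DecidableEq ι] (k : ℕ) (p : Fin (k + 1) → (Matrix ι ι K)[X])
    (a b : Fin (k + 1) → ι → K)
    (hp : ∀ i, ∃ c : K, c ≠ 0 ∧ (p i).leadingCoeff = c • vecMulVec (a i) (b i))
    (ha : a 0 ≠ 0) (hb : b (Fin.last k) ≠ 0) (hab : ∀ i : Fin k, b i.castSucc ⬝ᵥ a i.succ ≠ 0) :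
    (List.ofFn p).prod.natDegree = ∑ i, (p i).natDegree ∧
      ∃ c : K, c ≠ 0 ∧ (List.ofFn p).prod.leadingCoeff = c • vecMulVec (a 0) (b (Fin.last k)) := by
  induction k with
  | zero => simpa [Fin.last_zero] using hp 0
  | succ k ih =>
    have ha₁ : a (0 : Fin k.succ).succ ≠ 0 := fun h => hab 0 (by rw [h, dotProduct_zero])
    obtain ⟨hdeg, c, hc, hlead⟩ := ih (fun i => p i.succ) (fun i => a i.succ) (fun i => b i.succ)
      (fun i => hp i.succ) ha₁ (by rwa [Fin.succ_last])
      (fun i => by rw [Fin.succ_castSucc]; exact hab i.succ)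
    obtain ⟨c₀, hc₀, hlead₀⟩ := hp 0
    set c' := c₀ * c * (b 0 ⬝ᵥ a (0 : Fin k.succ).succ)
    have hc' : c' ≠ 0 := mul_ne_zero (mul_ne_zero hc₀ hc) (hab 0)
    have hmul : (p 0).leadingCoeff * (List.ofFn fun i => p i.succ).prod.leadingCoeff =
        c' • vecMulVec (a 0) (b (Fin.last (k + 1))) := by
      rw [hlead₀, hlead, smul_mul_smul, vecMulVec_mul_vecMulVec, vecMulVec_smul, smul_smul,
        Fin.succ_last]
    have hne : (p 0).leadingCoeff * (List.ofFn fun i => p i.succ).prod.leadingCoeff ≠ 0 :=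
      hmul ▸ smul_ne_zero hc' (vecMulVec_ne_zero ha hb)
    rw [List.ofFn_succ, List.prod_cons]
    refine ⟨?_, c', hc', ?_⟩
    · rw [natDegree_mul' hne, hdeg, Fin.sum_univ_succ (fun i => (p i).natDegree)]
    · rw [leadingCoeff_mul' hne, hmul]

lemma degPM_eq_natDegree_matPolyEquiv (n : ℕ) (U : PM n) :
    degPM n U = (matPolyEquiv U).natDegree := by
  refine eq_of_forall_ge_iff fun N => ?_
  simp only [degPM, Finset.sup_le_iff, Finset.mem_univ, true_implies, Prod.forall]
  refine ⟨fun h => natDegree_le_iff_coeff_eq_zero.mpr fun k hk => Matrix.ext fun i j => ?_,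
    fun h i j => natDegree_le_iff_coeff_eq_zero.mpr fun k hk => ?_⟩
  · rw [matPolyEquiv_coeff_apply]
    exact coeff_eq_zero_of_natDegree_lt ((h i j).trans_lt hk)
  · rw [← matPolyEquiv_coeff_apply, coeff_eq_zero_of_natDegree_lt (h.trans_lt hk),
      Matrix.zero_apply]

/-- Theorem 1, statement 4, degree additivity: for an alternating product
of nontrivial factors, `deg U = Σ deg G_{z_ι}(φ_ι,g_ι) = Σ deg(φ_ι − g_ι*g_ι)`. -/
theorem stmt7 (n : ℕ) (η : ℕ) (hη : 1 ≤ η)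
    (z : Fin η → (Fin (n + 2) → ℂ)) (φ : Fin η → ℂ[X]) (g : Fin η → (Fin (n + 2) → ℂ[X]))
    (hz : ∀ ι, z ι ∈ Xi n) (hφ : ∀ ι, φ ι ∈ Phi) (hg : ∀ ι, g ι ∈ DeltaZ n (z ι))
    (hnt : ∀ ι, ¬(φ ι = 0 ∧ g ι = 0))
    (halt : ∀ (i : ℕ) (h : i + 1 < η), z ⟨i, by omega⟩ ≠ z ⟨i + 1, h⟩)
    (U : PM n) (hU : U = (List.ofFn fun ι => Gmat n (z ι) (φ ι) (g ι)).prod) :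
    degPM n U = ∑ ι : Fin η, degPM n (Gmat n (z ι) (φ ι) (g ι)) ∧
      degPM n U = ∑ ι : Fin η, (φ ι - pdot n (g ι) (g ι)).natDegree := by
  obtain ⟨k, rfl⟩ : ∃ k, η = k + 1 := ⟨η - 1, by omega⟩
  have hG ι := matPolyEquiv_Gmat (ne_zero_of_mem_Xi (hz ι)) (hφ ι) (hg ι).1 (hnt ι)
  have hdeg : degPM n U = ∑ ι, degPM n (Gmat n (z ι) (φ ι) (g ι)) := by
    rw [hU, degPM_eq_natDegree_matPolyEquiv, map_list_prod, List.map_ofFn]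
    simp only [degPM_eq_natDegree_matPolyEquiv]
    refine (natDegree_prod_ofFn_of_leadingCoeff_eq_smul_vecMulVec k _ (fun ι => Dm n *ᵥ z ι)
      (fun ι => star (z ι)) (fun ι => (hG ι).2) (Dm_mulVec_ne_zero (ne_zero_of_mem_Xi (hz 0)))
      (star_ne_zero.mpr (ne_zero_of_mem_Xi (hz _))) fun i => ?_).1
    exact star_dotProduct_Dm_mulVec_ne_zero (hz _) (hz _) (halt i (by omega))
  refine ⟨hdeg, hdeg.trans (Finset.sum_congr rfl fun ι _ => ?_)⟩
  rw [degPM_eq_natDegree_matPolyEquiv, (hG ι).1, natDegree_sub_pdot (hφ ι).2]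
end
end

section
/- (Theorem 1, statement 5, center.) For every z ∈ Ξ, the center of the group M_z = {G_z(φ,g) : φ ∈ Φ, g ∈ Δ_z} is exactly Ψ_z = {G_z(φ,0) : φ ∈ Φ}: an element G_z(φ,g) commutes with every element of M_z if and only if g = 0. -/
open Polynomial Matrix

noncomputable section

namespace Stmt8Aux

/-- The diagonal vector of `Dm`. -/
def ddv (n : ℕ) : Fin (n + 2) → ℂ := fun i => if i = 0 then -1 else 1

lemma ddv_conj (n : ℕ) (k : Fin (n + 2)) : (starRingEnd ℂ) (ddv n k) = ddv n k := by
  unfold ddv; split_ifs <;> simp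

lemma Dm_diag (n : ℕ) : Dm n = Matrix.diagonal (ddv n) := rfl

lemma Dmap_diag (n : ℕ) :
    (Dm n).map Polynomial.C = Matrix.diagonal (fun i => Polynomial.C (ddv n i)) := by
  rw [Dm_diag, Matrix.diagonal_map (by simp)]

/-- The "of" part of `Gmat` with a free scalar polynomial `q`. -/
def offn (n : ℕ) (z : Fin (n + 2) → ℂ) (q : ℂ[X]) (g : Fin (n + 2) → ℂ[X]) :
    Fin (n + 2) → Fin (n + 2) → ℂ[X] :=
  fun i j => Polynomial.C (z i) * q * Polynomial.C (star (z j)) +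
    (Polynomial.C (z i) * cstar (g j) - g i * Polynomial.C (star (z j)))

lemma Gmat_eq (n : ℕ) (z : Fin (n + 2) → ℂ) (φ : ℂ[X]) (g : Fin (n + 2) → ℂ[X]) :
    Gmat n z φ g =
      (Dm n).map Polynomial.C *
        Matrix.of (offn n z (φ - Polynomial.C (1 / 2 : ℂ) * pdot n g g) g) + 1 := rfl

/-- `g(ω)* D h(ω)`. -/
def sD (n : ℕ) (g h : Fin (n + 2) → ℂ[X]) : ℂ[X] :=
  ∑ k, cstar (g k) * Polynomial.C (ddv n k) * h k

lemma L1 (n : ℕ) {z : Fin (n + 2) → ℂ} (hz : z ∈ Xi n) :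
    ∑ k, Polynomial.C (star (z k)) * Polynomial.C (ddv n k) * Polynomial.C (z k) = 0 := by
  have h2 := hz.2
  simp only [dotProduct, Matrix.mulVec_diagonal, Dm_diag, Pi.star_apply] at h2
  have : ∑ k, Polynomial.C (star (z k)) * Polynomial.C (ddv n k) * Polynomial.C (z k)
      = Polynomial.C (∑ k, star (z k) * (ddv n k * z k)) := by
    rw [map_sum]; exact Finset.sum_congr rfl fun k _ => by rw [mul_assoc, ← Polynomial.C_mul, ← Polynomial.C_mul]
  rw [this, h2, map_zero]

lemma L2 (n : ℕ) {z : Fin (n + 2) → ℂ} {h : Fin (n + 2) → ℂ[X]} (hh : h ∈ DeltaZ n z) :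
    ∑ k, Polynomial.C (star (z k)) * Polynomial.C (ddv n k) * h k = 0 := by
  ext m
  rw [Polynomial.finset_sum_coeff, Polynomial.coeff_zero]
  have e : ∀ k ∈ Finset.univ,
      (Polynomial.C (star (z k)) * Polynomial.C (ddv n k) * h k).coeff m
        = star (z k) * ddv n k * (h k).coeff m := by
    intro k _
    rw [← Polynomial.C_mul, Polynomial.coeff_C_mul]
  rw [Finset.sum_congr rfl e]
  have h2 := (hh.2 m).2
  simp only [dotProduct, Matrix.mulVec_diagonal, Dm_diag, Pi.star_apply] at h2
  have := congrArg (starRingEnd ℂ) h2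
  rw [map_sum, map_zero] at this
  rw [← this]
  refine Finset.sum_congr rfl fun k _ => ?_
  rw [RingHom.map_mul, RingHom.map_mul, ddv_conj]
  simp only [RCLike.star_def, Complex.conj_conj]
  ring

lemma L3 (n : ℕ) {z : Fin (n + 2) → ℂ} {g : Fin (n + 2) → ℂ[X]} (hg : g ∈ DeltaZ n z) :
    ∑ k, cstar (g k) * Polynomial.C (ddv n k) * Polynomial.C (z k) = 0 := by
  ext m
  rw [Polynomial.finset_sum_coeff, Polynomial.coeff_zero]
  have e : ∀ k ∈ Finset.univ,
      (cstar (g k) * Polynomial.C (ddv n k) * Polynomial.C (z k)).coeff m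
        = star ((g k).coeff m) * (ddv n k * z k) := by
    intro k _
    rw [mul_assoc, ← Polynomial.C_mul, Polynomial.coeff_mul_C, cstar, Polynomial.coeff_map]
    rfl
  rw [Finset.sum_congr rfl e]
  have h2 := (hg.2 m).2
  simp only [dotProduct, Matrix.mulVec_diagonal, Dm_diag, Pi.star_apply] at h2
  exact h2

lemma middle (n : ℕ) {z : Fin (n + 2) → ℂ} (hz : z ∈ Xi n)
    {g h : Fin (n + 2) → ℂ[X]} (hg : g ∈ DeltaZ n z) (hh : h ∈ DeltaZ n z) (q r : ℂ[X]) :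
    Matrix.of (offn n z q g) * (Dm n).map Polynomial.C * Matrix.of (offn n z r h) =
      Matrix.of (fun i j => -(Polynomial.C (z i) * sD n g h * Polynomial.C (star (z j)))) := by
  apply Matrix.ext
  intro i j
  rw [Dmap_diag]
  rw [Matrix.mul_apply]
  have e1 : ∀ k ∈ Finset.univ,
      (Matrix.of (offn n z q g) * Matrix.diagonal fun i => Polynomial.C (ddv n i)) i k *
        Matrix.of (offn n z r h) k j
      = offn n z q g i k * Polynomial.C (ddv n k) * offn n z r h k j := by
    intro k _
    rw [Matrix.mul_diagonal]
    rfl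
  rw [Finset.sum_congr rfl e1]
  have e2 : ∀ k ∈ Finset.univ,
      offn n z q g i k * Polynomial.C (ddv n k) * offn n z r h k j
      = Polynomial.C (z i) * q *
          ((Polynomial.C (star (z k)) * Polynomial.C (ddv n k) * Polynomial.C (z k)) *
              (r * Polynomial.C (star (z j)) + cstar (h j))
            - (Polynomial.C (star (z k)) * Polynomial.C (ddv n k) * h k) *
              Polynomial.C (star (z j)))
        + Polynomial.C (z i) *
          ((cstar (g k) * Polynomial.C (ddv n k) * Polynomial.C (z k)) *
              (r * Polynomial.C (star (z j)) + cstar (h j))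
            - (cstar (g k) * Polynomial.C (ddv n k) * h k) * Polynomial.C (star (z j)))
        - g i *
          ((Polynomial.C (star (z k)) * Polynomial.C (ddv n k) * Polynomial.C (z k)) *
              (r * Polynomial.C (star (z j)) + cstar (h j))
            - (Polynomial.C (star (z k)) * Polynomial.C (ddv n k) * h k) *
              Polynomial.C (star (z j))) := by
    intro k _
    simp only [offn]
    ring
  rw [Finset.sum_congr rfl e2]
  simp only [Finset.sum_sub_distrib, Finset.sum_add_distrib, ← Finset.mul_sum, ← Finset.sum_mul]
  rw [L1 n hz, L2 n hh, L3 n hg]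
  simp only [Matrix.of_apply, sD, zero_mul, zero_sub, mul_neg, sub_zero, mul_zero]
  ring

lemma prod_eq (n : ℕ) {z : Fin (n + 2) → ℂ} (hz : z ∈ Xi n)
    {g h : Fin (n + 2) → ℂ[X]} (hg : g ∈ DeltaZ n z) (hh : h ∈ DeltaZ n z) (φ ψ : ℂ[X]) :
    Gmat n z φ g * Gmat n z ψ h =
      (Dm n).map Polynomial.C *
        Matrix.of (fun i j =>
          offn n z (φ - Polynomial.C (1 / 2 : ℂ) * pdot n g g) g i j +
          offn n z (ψ - Polynomial.C (1 / 2 : ℂ) * pdot n h h) h i j -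
          Polynomial.C (z i) * sD n g h * Polynomial.C (star (z j))) + 1 := by
  set q := φ - Polynomial.C (1 / 2 : ℂ) * pdot n g g with hq
  set r := ψ - Polynomial.C (1 / 2 : ℂ) * pdot n h h with hr
  set D := (Dm n).map Polynomial.C with hD
  set A := Matrix.of (offn n z q g) with hA
  set B := Matrix.of (offn n z r h) with hB
  have h1 : Gmat n z φ g * Gmat n z ψ h = D * (A * D * B) + (D * A + D * B + 1) := by
    rw [Gmat_eq, Gmat_eq, ← hq, ← hr, ← hD, ← hA, ← hB]
    noncomm_ring
  rw [h1, middle n hz hg hh q r]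
  have h2 : A + B + Matrix.of (fun i j =>
        -(Polynomial.C (z i) * sD n g h * Polynomial.C (star (z j))))
      = Matrix.of (fun i j => offn n z q g i j + offn n z r h i j -
          Polynomial.C (z i) * sD n g h * Polynomial.C (star (z j))) := by
    ext i j
    simp only [Matrix.add_apply, Matrix.of_apply, hA, hB]
    ring
  rw [← h2, Matrix.mul_add, Matrix.mul_add]
  abel

lemma DD_one (n : ℕ) : (Dm n).map Polynomial.C * (Dm n).map Polynomial.C = 1 := by
  rw [Dmap_diag, Matrix.diagonal_mul_diagonal]
  have : (fun i => Polynomial.C (ddv n i) * Polynomial.C (ddv n i)) = fun _ : Fin (n+2) => (1:ℂ[X]) := by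
    funext i
    rw [← Polynomial.C_mul]
    unfold ddv
    split_ifs <;> norm_num
  rw [this, Matrix.diagonal_one]

lemma sD_comm_of_commute (n : ℕ) {z : Fin (n + 2) → ℂ} (hz : z ∈ Xi n)
    {g h : Fin (n + 2) → ℂ[X]} (hg : g ∈ DeltaZ n z) (hh : h ∈ DeltaZ n z) (φ ψ : ℂ[X])
    (hc : Gmat n z φ g * Gmat n z ψ h = Gmat n z ψ h * Gmat n z φ g) :
    sD n g h = sD n h g := by
  rw [prod_eq n hz hg hh φ ψ, prod_eq n hz hh hg ψ φ] at hc
  have hc1 := add_right_cancel hc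
  have hc2 := congrArg (fun M => (Dm n).map Polynomial.C * M) hc1
  simp only [← Matrix.mul_assoc, DD_one, Matrix.one_mul] at hc2
  have hc3 := congrFun (congrFun hc2 0) 0
  simp only [Matrix.of_apply, hz.1, star_one, Polynomial.C_1, one_mul, mul_one] at hc3
  linear_combination -hc3

lemma zero_mem_DeltaZ (n : ℕ) (z : Fin (n + 2) → ℂ) : (0 : Fin (n + 2) → ℂ[X]) ∈ DeltaZ n z := by
  refine ⟨fun i => by simp, fun m => ⟨?_, ?_⟩⟩ <;>
    simp [dotProduct]

lemma zero_mem_Phi : (0 : ℂ[X]) ∈ Phi := by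
  refine ⟨by simp, ?_⟩
  simp [cstar]

lemma sD_zero_left (n : ℕ) (h : Fin (n + 2) → ℂ[X]) : sD n 0 h = 0 := by
  unfold sD
  refine Finset.sum_eq_zero fun k _ => ?_
  simp [cstar]

lemma sD_zero_right (n : ℕ) (h : Fin (n + 2) → ℂ[X]) : sD n h 0 = 0 := by
  unfold sD
  refine Finset.sum_eq_zero fun k _ => ?_
  simp

lemma central_of_zero (n : ℕ) {z : Fin (n + 2) → ℂ} (hz : z ∈ Xi n) (φ : ℂ[X]) :
    ∀ B ∈ Mz n z, Gmat n z φ 0 * B = B * Gmat n z φ 0 := by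
  rintro B ⟨ψ, hψ, h, hh, rfl⟩
  rw [prod_eq n hz (zero_mem_DeltaZ n z) hh φ ψ, prod_eq n hz hh (zero_mem_DeltaZ n z) ψ φ,
    sD_zero_left, sD_zero_right]
  have e : (fun i j => offn n z (φ - Polynomial.C (1 / 2 : ℂ) * pdot n 0 0) 0 i j +
        offn n z (ψ - Polynomial.C (1 / 2 : ℂ) * pdot n h h) h i j -
        Polynomial.C (z i) * 0 * Polynomial.C (star (z j)))
      = (fun i j => offn n z (ψ - Polynomial.C (1 / 2 : ℂ) * pdot n h h) h i j +
        offn n z (φ - Polynomial.C (1 / 2 : ℂ) * pdot n 0 0) 0 i j -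
        Polynomial.C (z i) * 0 * Polynomial.C (star (z j))) := by
    funext i j
    ring
  rw [e]

lemma g0_eq_zero (n : ℕ) {z : Fin (n + 2) → ℂ} (hz : z ∈ Xi n)
    {g : Fin (n + 2) → ℂ[X]} (hg : g ∈ DeltaZ n z) : g 0 = 0 := by
  ext m
  obtain ⟨c1, c2⟩ := hg.2 m
  simp only [dotProduct, Matrix.mulVec_diagonal, Dm_diag, Pi.star_apply] at c1 c2
  have hsub : ∑ i, (star ((g i).coeff m) * z i - star ((g i).coeff m) * (ddv n i * z i)) = 0 := by
    rw [Finset.sum_sub_distrib, c1, c2, sub_zero]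
  have he : ∀ i ∈ Finset.univ,
      star ((g i).coeff m) * z i - star ((g i).coeff m) * (ddv n i * z i)
        = if i = 0 then 2 * star ((g i).coeff m) * z i else 0 := by
    intro i _
    unfold ddv
    split_ifs <;> ring
  rw [Finset.sum_congr rfl he, Finset.sum_ite_eq' Finset.univ (0 : Fin (n+2))] at hsub
  simp only [Finset.mem_univ, if_true, hz.1, mul_one] at hsub
  have hs0 : star ((g 0).coeff m) = 0 := by
    rcases mul_eq_zero.1 hsub with h | h
    · exact absurd h two_ne_zero
    · exact h
  simpa using congrArg star hs0

lemma cstar_eval (p : ℂ[X]) (x : ℂ) : (cstar p).eval x = star (p.eval (star x)) := by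
  rw [cstar, Polynomial.eval_map, Polynomial.eval₂_eq_sum, Polynomial.eval_eq_sum,
    Polynomial.sum, Polynomial.sum, star_sum]
  refine Finset.sum_congr rfl fun k _ => ?_
  simp [star_mul', star_pow, mul_comm]

lemma g_eq_zero (n : ℕ) {z : Fin (n + 2) → ℂ} (hz : z ∈ Xi n)
    {g : Fin (n + 2) → ℂ[X]} (hg : g ∈ DeltaZ n z) (hs : sD n g g = 0) : g = 0 := by
  have h0 : g 0 = 0 := g0_eq_zero n hz hg
  funext k
  by_cases hk : k = 0
  · rw [hk, h0]; rfl
  · have hval : ∀ x : ℝ, (g k).eval (x : ℂ) = 0 := by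
      intro x
      have he := congrArg (Polynomial.eval (x : ℂ)) hs
      simp only [sD, Polynomial.eval_finset_sum, Polynomial.eval_mul, Polynomial.eval_C,
        Polynomial.eval_zero, cstar_eval] at he
      have hx : star ((x : ℝ) : ℂ) = ((x : ℝ) : ℂ) := by
        simp [Complex.conj_ofReal]
      rw [hx] at he
      have hre : ∀ l ∈ Finset.univ,
          (star ((g l).eval (x:ℂ)) * ddv n l * (g l).eval (x:ℂ)).re
            = if l = 0 then 0 else Complex.normSq ((g l).eval (x:ℂ)) := by
        intro l _
        by_cases hl : l = 0
        · simp [hl, h0]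
        · have hd : ddv n l = 1 := by unfold ddv; simp [hl]
          have hmc : star ((g l).eval (x:ℂ)) * (g l).eval (x:ℂ)
              = ((Complex.normSq ((g l).eval (x:ℂ)) : ℝ) : ℂ) := by
            rw [mul_comm]
            exact Complex.mul_conj _
          rw [hd, mul_one, hmc]
          simp [hl]
      have hre0 := congrArg Complex.re he
      rw [Complex.re_sum, Finset.sum_congr rfl hre, Complex.zero_re] at hre0
      have hnn : ∀ l ∈ Finset.univ,
          (0:ℝ) ≤ if l = 0 then 0 else Complex.normSq ((g l).eval (x:ℂ)) := by
        intro l _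
        split_ifs
        · exact le_refl 0
        · exact Complex.normSq_nonneg _
      have := (Finset.sum_eq_zero_iff_of_nonneg hnn).1 hre0 k (Finset.mem_univ k)
      simp only [hk, if_false] at this
      exact Complex.normSq_eq_zero.1 this
    apply Polynomial.eq_zero_of_infinite_isRoot
    apply Set.Infinite.mono (s := Set.range (fun x : ℝ => (x : ℂ)))
    · rintro y ⟨x, rfl⟩
      exact hval x
    · exact Set.infinite_range_of_injective Complex.ofReal_injective

lemma smul_mem_DeltaZ (n : ℕ) {z : Fin (n + 2) → ℂ} {g : Fin (n + 2) → ℂ[X]}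
    (hg : g ∈ DeltaZ n z) (c : ℂ) :
    (fun k => Polynomial.C c * g k) ∈ DeltaZ n z := by
  refine ⟨fun i => by simp [hg.1 i], fun m => ?_⟩
  obtain ⟨c1, c2⟩ := hg.2 m
  constructor
  · simp only [dotProduct, Pi.star_apply, Polynomial.coeff_C_mul] at c1 ⊢
    have : ∀ i ∈ Finset.univ, star (c * (g i).coeff m) * z i
        = star c * (star ((g i).coeff m) * z i) := by
      intro i _
      rw [star_mul']
      ring
    rw [Finset.sum_congr rfl this, ← Finset.mul_sum, c1, mul_zero]
  · simp only [dotProduct, Pi.star_apply, Polynomial.coeff_C_mul] at c2 ⊢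
    have : ∀ i ∈ Finset.univ, star (c * (g i).coeff m) * (Dm n).mulVec z i
        = star c * (star ((g i).coeff m) * (Dm n).mulVec z i) := by
      intro i _
      rw [star_mul']
      ring
    rw [Finset.sum_congr rfl this, ← Finset.mul_sum, c2, mul_zero]

lemma zero_of_central (n : ℕ) {z : Fin (n + 2) → ℂ} (hz : z ∈ Xi n) (φ : ℂ[X])
    {g : Fin (n + 2) → ℂ[X]} (hg : g ∈ DeltaZ n z)
    (hc : ∀ B ∈ Mz n z, Gmat n z φ g * B = B * Gmat n z φ g) : g = 0 := by
  have hIg := smul_mem_DeltaZ n hg Complex.I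
  have hB : Gmat n z 0 (fun k => Polynomial.C Complex.I * g k) ∈ Mz n z :=
    ⟨0, zero_mem_Phi, _, hIg, rfl⟩
  have hsym := sD_comm_of_commute n hz hg hIg φ 0 (hc _ hB)
  have e1 : sD n g (fun k => Polynomial.C Complex.I * g k) = Polynomial.C Complex.I * sD n g g := by
    unfold sD
    rw [Finset.mul_sum]
    exact Finset.sum_congr rfl fun k _ => by ring
  have e2 : sD n (fun k => Polynomial.C Complex.I * g k) g
      = - (Polynomial.C Complex.I * sD n g g) := by
    unfold sD
    have e : ∀ k ∈ Finset.univ,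
        cstar (Polynomial.C Complex.I * g k) * Polynomial.C (ddv n k) * g k
          = -(Polynomial.C Complex.I) * (cstar (g k) * Polynomial.C (ddv n k) * g k) := by
      intro k _
      simp only [cstar, Polynomial.map_mul, Polynomial.map_C, Complex.conj_I, map_neg]
      ring
    rw [Finset.sum_congr rfl e, ← Finset.mul_sum]
    ring
  rw [e1, e2] at hsym
  have h2 : sD n g g = 0 := by
    have hI : Polynomial.C Complex.I ≠ 0 := by
      simp [Polynomial.C_eq_zero, Complex.I_ne_zero]
    have : (2 : ℂ[X]) * (Polynomial.C Complex.I * sD n g g) = 0 := by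
      linear_combination hsym
    rcases mul_eq_zero.1 this with h | h
    · exact absurd h (by norm_num)
    · rcases mul_eq_zero.1 h with h' | h'
      · exact absurd h' hI
      · exact h'
  exact g_eq_zero n hz hg h2

end Stmt8Aux

/-- Theorem 1, statement 5, center: the center of `M_z` is exactly
`Ψ_z = {G_z(φ,0)}`; an element `G_z(φ,g)` is central iff `g = 0`. -/
theorem stmt8 (n : ℕ) (z : Fin (n + 2) → ℂ) (hz : z ∈ Xi n) :
    {U ∈ Mz n z | ∀ B ∈ Mz n z, U * B = B * U} = Psi n z ∧
      ∀ φ ∈ Phi, ∀ g ∈ DeltaZ n z,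
        ((∀ B ∈ Mz n z, Gmat n z φ g * B = B * Gmat n z φ g) ↔ g = 0) := by
  constructor
  · ext U
    constructor
    · rintro ⟨⟨φ, hφ, g, hg, rfl⟩, hcomm⟩
      have hg0 : g = 0 := Stmt8Aux.zero_of_central n hz φ hg hcomm
      exact ⟨φ, hφ, by rw [hg0]⟩
    · rintro ⟨φ, hφ, rfl⟩
      exact ⟨⟨φ, hφ, 0, Stmt8Aux.zero_mem_DeltaZ n z, rfl⟩, Stmt8Aux.central_of_zero n hz φ⟩
  · intro φ hφ g hg
    constructor
    · intro hcomm
      exact Stmt8Aux.zero_of_central n hz φ hg hcomm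
    · rintro rfl
      exact Stmt8Aux.central_of_zero n hz φ
end
end

section
/- (Theorem 2, case ν = 2.) Let ν = 2 and let U(ω) = Σ_{ι=0}^{κ} U_ι ω^ι be a polynomial matrix all of whose coefficients U_ι are real 2×2 matrices. If U(ω)·D·U(ω)ᵀ = D identically in ω and U(0) = I, then U(ω) ≡ I. -/
/-!
The diagonal entries of `U D Uᵀ = D` read `U₀₀² - U₀₁² = 1` and `U₁₁² - U₁₀² = 1`. Factoring
them as `(a + b)(a - b) = 1` shows that every entry of `U` is a constant polynomial, and
`U(0) = I` then fixes those constants.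
-/

open Polynomial Matrix

noncomputable section

/-- The matrix `D = diag(-1, 1)` of size `2 × 2` over `ℝ`. -/
def D2 : Matrix (Fin 2) (Fin 2) ℝ :=
  Matrix.diagonal fun i => if i = 0 then -1 else 1

/-- `a ± b` are units of `K[X]`, hence constants, and `2a`, `2b` are their sum and difference. -/
lemma natDegree_eq_zero_of_mul_self_sub_mul_self_eq_one {K : Type*} [Field K] [NeZero (2 : K)]
    {a b : K[X]} (h : a * a - b * b = 1) : a.natDegree = 0 ∧ b.natDegree = 0 := by
  have hprod : (a + b) * (a - b) = 1 := by linear_combination h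
  have hsum : (a + b).natDegree = 0 :=
    natDegree_eq_zero_of_isUnit (.of_mul_eq_one _ hprod)
  have hdiff : (a - b).natDegree = 0 :=
    natDegree_eq_zero_of_isUnit (.of_mul_eq_one _ (by rwa [mul_comm] at hprod))
  constructor
  · rw [← natDegree_C_mul (NeZero.ne (2 : K)),
      show C 2 * a = (a + b) + (a - b) by rw [map_ofNat]; ring]
    have := natDegree_add_le (a + b) (a - b)
    omega
  · rw [← natDegree_C_mul (NeZero.ne (2 : K)),
      show C 2 * b = (a + b) - (a - b) by rw [map_ofNat]; ring]
    have := natDegree_sub_le (a + b) (a - b)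
    omega

/-- Theorem 2, case ν = 2: a real polynomial `2 × 2` matrix with
`U(ω) D U(ω)ᵀ = D` identically in `ω` and `U(0) = I` is identically `I`. -/
theorem stmt10 (U : Matrix (Fin 2) (Fin 2) (Polynomial ℝ))
    (hU : U * D2.map Polynomial.C * Uᵀ = D2.map Polynomial.C)
    (hU0 : U.map (fun p => p.eval 0) = 1) :
    U = 1 := by
  obtain ⟨hrow0, hrow1⟩ : -(U 0 0 * U 0 0) + U 0 1 * U 0 1 = -1 ∧
      -(U 1 0 * U 1 0) + U 1 1 * U 1 1 = 1 := by
    simpa [mul_apply, Fin.sum_univ_two, D2, diagonal_apply] using fun i => congrFun (congrFun hU i) i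
  obtain ⟨h00, h01⟩ := natDegree_eq_zero_of_mul_self_sub_mul_self_eq_one
    (a := U 0 0) (b := U 0 1) (by linear_combination -hrow0)
  obtain ⟨h11, h10⟩ := natDegree_eq_zero_of_mul_self_sub_mul_self_eq_one
    (a := U 1 1) (b := U 1 0) (by linear_combination hrow1)
  have hconst : ∀ i j, (U i j).natDegree = 0 := by
    intro i j
    fin_cases i <;> fin_cases j <;> assumption
  calc U = (U.map fun p => p.eval 0).map C := by
        refine Matrix.ext fun i j => ?_
        rw [map_apply, map_apply, ← coeff_zero_eq_eval_zero]
        exact eq_C_of_natDegree_eq_zero (hconst i j)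
    _ = 1 := by rw [hU0, Matrix.map_one C (map_zero C) (map_one C)]
end
end

section
/- If C is a ν×ν Hermitian positive-definite matrix (in particular C = I) and U(ω) = Σ_{ι=0}^{κ} U_ι ω^ι is a polynomial matrix with complex ν×ν coefficients satisfying U(ω)·C·U(ω)* = C identically in ω together with the normalization U(0) = I, then U(ω) ≡ I. -/
/-!
Compare the coefficients of degree `2d` on both sides of `U C U* = C`, where `d` is the degree of
`U`: on the left only the leading coefficients contribute, giving `U_d C U_d*`, while on the right
this coefficient vanishes as soon as `d > 0`. Positive definiteness of `C` turns `U_d C U_d* = 0`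
into `U_d = 0`, which is impossible for a leading coefficient. Hence `U` is constant, equal to
`U(0) = I`.
-/

open Polynomial Matrix ComplexOrder

noncomputable section

/-- `U(ω)* = Σ Uι* ωⁱ` : coefficientwise conjugate transpose of a polynomial matrix. -/
def MstarG (ν : ℕ) (U : Matrix (Fin ν) (Fin ν) ℂ[X]) : Matrix (Fin ν) (Fin ν) ℂ[X] :=
  Matrix.of fun i j => (U j i).map (starRingEnd ℂ)

theorem Matrix.PosDef.eq_zero_of_mul_mul_conjTranspose_eq_zero {m n R : Type*} [Fintype n]
    [Ring R] [PartialOrder R] [StarRing R] {A : Matrix n n R} (hA : A.PosDef)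
    {B : Matrix m n R} (h : B * A * Bᴴ = 0) : B = 0 := by
  ext i j
  suffices hrow : star (B i) = 0 by
    simpa using congrFun hrow j
  by_contra hne
  have hdiag : star (star (B i)) ⬝ᵥ (A *ᵥ star (B i)) = (B * A * Bᴴ) i i := by
    simp only [star_star, mul_apply, conjTranspose_apply, dotProduct, mulVec, Pi.star_apply,
      Finset.mul_sum, Finset.sum_mul, mul_assoc]
    exact Finset.sum_comm
  exact (hA.dotProduct_mulVec_pos hne).ne' (by rw [hdiag, h, zero_apply])

theorem Polynomial.natDegree_eq_zero_of_mul_C_mul_eq_C {R : Type*} [Semiring R] [StarAddMonoid R]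
    {a : R} (ha : ∀ b, b * a * star b = 0 → b = 0) {P Q : R[X]}
    (hQ : ∀ k, Q.coeff k = star (P.coeff k)) (h : P * C a * Q = C a) : P.natDegree = 0 := by
  by_contra hd
  set d := P.natDegree
  have hQd : Q.natDegree ≤ d := natDegree_le_iff_coeff_eq_zero.2 fun k hk => by
    rw [hQ, coeff_eq_zero_of_natDegree_lt hk, star_zero]
  have hPad : (P * C a).natDegree ≤ d := by
    simpa using natDegree_mul_le_of_le le_rfl (natDegree_C a).le
  have htop : P.coeff d * a * star (P.coeff d) = 0 := by
    have := congrArg (coeff · (d + d)) h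
    simp only [coeff_mul_add_eq_of_natDegree_le hPad hQd, coeff_mul_C, hQ, coeff_C] at this
    simpa [hd] using this
  exact leadingCoeff_ne_zero.2 (ne_zero_of_natDegree_gt (Nat.pos_of_ne_zero hd)) (ha _ htop)

theorem coeff_matPolyEquiv_MstarG (ν : ℕ) (U : Matrix (Fin ν) (Fin ν) ℂ[X]) (k : ℕ) :
    (matPolyEquiv (MstarG ν U)).coeff k = star ((matPolyEquiv U).coeff k) := by
  ext i j
  simp [MstarG, matPolyEquiv_coeff_apply]

/-- if `C` is Hermitian positive definite (e.g. `C = I`) and a complex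
polynomial matrix satisfies `U(ω) C U(ω)* = C` identically with `U(0) = I`, then `U ≡ I`. -/
theorem stmt12 (ν : ℕ) (A : Matrix (Fin ν) (Fin ν) ℂ) (hA : A.PosDef)
    (U : Matrix (Fin ν) (Fin ν) ℂ[X])
    (hU : U * A.map Polynomial.C * MstarG ν U = A.map Polynomial.C)
    (hU0 : U.map (fun p => p.eval 0) = 1) :
    U = 1 := by
  have hP : matPolyEquiv U * C A * matPolyEquiv (MstarG ν U) = C A := by
    simpa only [map_mul, matPolyEquiv_map_C] using congrArg matPolyEquiv hU
  have hdeg : (matPolyEquiv U).natDegree = 0 :=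
    natDegree_eq_zero_of_mul_C_mul_eq_C
      (fun B hB => hA.eq_zero_of_mul_mul_conjTranspose_eq_zero (by rwa [← star_eq_conjTranspose]))
      (coeff_matPolyEquiv_MstarG ν U) hP
  have hcoeff0 : (matPolyEquiv U).coeff 0 = 1 := by
    simpa [coeff_zero_eq_eval_zero, hU0] using matPolyEquiv_eval_eq_map U 0
  apply matPolyEquiv.injective
  rw [map_one, eq_C_of_natDegree_eq_zero hdeg, hcoeff0, C_1]
end
end

section
/- (Lemma 3.) Let X be a complex ν×ν matrix with X·D·X* = 0 and X*·D·X = 0. Then there exist vectors y, z ∈ Ξ and a scalar α ∈ ℂ such that X = α·D·y·z*. -/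
open Matrix

noncomputable section

/-!
A vector with `w 0 = 0` is `D`-isotropic only if it vanishes, since `D` is positive definite on
that hyperplane. The condition `X* D X = 0` makes every vector `X s` isotropic, so for any two
columns the combination with vanishing first entry is zero: the columns are proportional and
`X = c b*` with `c` a column normalised to `c 0 = 1`. Likewise `X D X* = 0` makes the vector
`b = X* e₀` isotropic, and `b ≠ 0` forces `b 0 ≠ 0`. Writing `c = -D y` (using `D² = 1`) and
`b = b 0 • z` gives `X = -conj (b 0) • D y z*` with `y, z ∈ Ξ`.
-/

def IsIsotropic {n : ℕ} (w : Fin (n + 2) → ℂ) : Prop :=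
  star w ⬝ᵥ Dm n *ᵥ w = 0

namespace Dm

variable {n : ℕ}

lemma mul_self : Dm n * Dm n = 1 := by
  rw [Dm, diagonal_mul_diagonal, ← diagonal_one]
  congr 1
  ext i
  split_ifs <;> norm_num

lemma conjTranspose : (Dm n)ᴴ = Dm n := by
  simp only [Dm, diagonal_conjTranspose]
  congr 1
  ext i
  split_ifs <;> simp [*]

lemma mulVec_apply_zero (w : Fin (n + 2) → ℂ) : (Dm n *ᵥ w) 0 = -w 0 := by
  simp [Dm, mulVec_diagonal]

lemma star_dotProduct_mulVec_self (w : Fin (n + 2) → ℂ) :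
    star w ⬝ᵥ Dm n *ᵥ w = ∑ i, (if i = 0 then -1 else 1) * (Complex.normSq (w i) : ℂ) := by
  simp only [Dm, mulVec_diagonal, dotProduct, Pi.star_apply, RCLike.star_def]
  refine Finset.sum_congr rfl fun i _ => ?_
  rw [Complex.normSq_eq_conj_mul_self]
  ring

end Dm

namespace IsIsotropic

variable {n : ℕ} {w : Fin (n + 2) → ℂ}

lemma eq_zero_of_apply_zero (hw : IsIsotropic w) (h0 : w 0 = 0) : w = 0 := by
  have hsum : ∑ i, Complex.normSq (w i) = 0 := by
    have h : star w ⬝ᵥ Dm n *ᵥ w = 0 := hw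
    rw [Dm.star_dotProduct_mulVec_self] at h
    have hC : ∑ i, (Complex.normSq (w i) : ℂ) = 0 := by
      rw [← h]
      exact Finset.sum_congr rfl fun i _ => by by_cases hi : i = 0 <;> simp [hi, h0]
    exact_mod_cast hC
  funext i
  simpa using (Finset.sum_eq_zero_iff_of_nonneg fun i _ => Complex.normSq_nonneg (w i)).1 hsum i
    (Finset.mem_univ i)

lemma apply_zero_ne_zero (hw : IsIsotropic w) (hne : w ≠ 0) : w 0 ≠ 0 :=
  mt hw.eq_zero_of_apply_zero hne

lemma smul (hw : IsIsotropic w) (a : ℂ) : IsIsotropic (a • w) := by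
  rw [IsIsotropic, star_smul, mulVec_smul, smul_dotProduct, dotProduct_smul, hw, smul_zero,
    smul_zero]

lemma Dm_mulVec (hw : IsIsotropic w) : IsIsotropic (Dm n *ᵥ w) := by
  rw [IsIsotropic, star_mulVec, Dm.conjTranspose, ← dotProduct_mulVec, mulVec_mulVec,
    Dm.mul_self, one_mulVec]
  exact hw

lemma inv_apply_zero_smul_mem_Xi (hw : IsIsotropic w) (h0 : w 0 ≠ 0) : (w 0)⁻¹ • w ∈ Xi n :=
  ⟨by simp [h0], hw.smul _⟩

end IsIsotropic

lemma isIsotropic_mulVec {n : ℕ} {X : Matrix (Fin (n + 2)) (Fin (n + 2)) ℂ}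
    (hX : Xᴴ * Dm n * X = 0) (s : Fin (n + 2) → ℂ) : IsIsotropic (X *ᵥ s) := by
  rw [IsIsotropic, mulVec_mulVec, star_mulVec, dotProduct_mulVec, vecMul_vecMul,
    ← Matrix.mul_assoc, hX, vecMul_zero, zero_dotProduct]

lemma single_zero_add_single_one_mem_Xi {n : ℕ} :
    (Pi.single 0 1 + Pi.single 1 1 : Fin (n + 2) → ℂ) ∈ Xi n := by
  refine ⟨by simp, ?_⟩
  rw [Dm.star_dotProduct_mulVec_self, Fin.sum_univ_succ, Fin.sum_univ_succ]
  simp [Fin.ext_iff]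

lemma neg_Dm_mulVec_mem_Xi {n : ℕ} {c : Fin (n + 2) → ℂ} (hc : c ∈ Xi n) :
    -(Dm n *ᵥ c) ∈ Xi n := by
  have h0 : (Dm n *ᵥ c) 0 = -1 := by rw [Dm.mulVec_apply_zero, hc.1]
  simpa [h0] using (IsIsotropic.Dm_mulVec hc.2).inv_apply_zero_smul_mem_Xi (by simp [h0])

section

variable {n : ℕ} {X : Matrix (Fin (n + 2)) (Fin (n + 2)) ℂ}

lemma mul_apply_eq_mul_apply_of_conjTranspose_mul_Dm_mul_eq_zero (hX : Xᴴ * Dm n * X = 0)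
    (i j k : Fin (n + 2)) : X 0 k * X i j = X 0 j * X i k := by
  set w := X *ᵥ (X 0 k • Pi.single j 1 - X 0 j • Pi.single k 1)
  have hw : ∀ l, w l = X 0 k * X l j - X 0 j * X l k := fun l => by
    simp [w, mulVec_sub, mulVec_smul]
  have hw0 : w 0 = 0 := by rw [hw]; ring
  have hw_eq : w = 0 := (isIsotropic_mulVec hX _).eq_zero_of_apply_zero hw0
  exact sub_eq_zero.1 ((hw i).symm.trans (congrFun hw_eq i))

lemma exists_mem_Xi_eq_vecMulVec_star (hX : Xᴴ * Dm n * X = 0) (hX' : X * Dm n * Xᴴ = 0)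
    (hne : X ≠ 0) :
    ∃ c ∈ Xi n, ∃ b : Fin (n + 2) → ℂ, IsIsotropic b ∧ b 0 ≠ 0 ∧ X = vecMulVec c (star b) := by
  obtain ⟨i, k, hik⟩ : ∃ i k, X i k ≠ 0 := by
    by_contra! h
    exact hne (Matrix.ext h)
  have hcol : IsIsotropic (X.col k) := mulVec_single_one X k ▸ isIsotropic_mulVec hX _
  have hXk : X 0 k ≠ 0 := hcol.apply_zero_ne_zero fun h => hik (congrFun h i)
  set b := Xᴴ *ᵥ Pi.single 0 1
  have hb : IsIsotropic b := isIsotropic_mulVec (by rwa [conjTranspose_conjTranspose]) _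
  have hbk : b k = star (X 0 k) := by simp [b]
  have hb0 : b 0 ≠ 0 := hb.apply_zero_ne_zero fun h => hXk (by simpa [h] using hbk.symm)
  refine ⟨(X 0 k)⁻¹ • X.col k, hcol.inv_apply_zero_smul_mem_Xi hXk, b, hb, hb0, ?_⟩
  ext i j
  have hprop := mul_apply_eq_mul_apply_of_conjTranspose_mul_Dm_mul_eq_zero hX i j k
  simp only [b, mulVec_single_one, vecMulVec_apply, Pi.smul_apply, col_apply, smul_eq_mul,
    Pi.star_apply, conjTranspose_apply, star_star]
  field_simp
  linear_combination hprop

end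

/-- Lemma 3: if `X D X* = 0` and `X* D X = 0` then `X = α D y z*`
for some `y, z ∈ Ξ` and `α ∈ ℂ`. -/
theorem stmt15 (n : ℕ) (X : Matrix (Fin (n + 2)) (Fin (n + 2)) ℂ)
    (h1 : X * Dm n * Xᴴ = 0) (h2 : Xᴴ * Dm n * X = 0) :
    ∃ y ∈ Xi n, ∃ z ∈ Xi n, ∃ α : ℂ,
      X = α • (Dm n * vecMulVec y (star z)) := by
  by_cases hX : X = 0
  · exact ⟨_, single_zero_add_single_one_mem_Xi, _, single_zero_add_single_one_mem_Xi, 0,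
      by simp [hX]⟩
  obtain ⟨c, hc, b, hb, hb0, rfl⟩ := exists_mem_Xi_eq_vecMulVec_star h2 h1 hX
  refine ⟨-(Dm n *ᵥ c), neg_Dm_mulVec_mem_Xi hc, (b 0)⁻¹ • b,
    hb.inv_apply_zero_smul_mem_Xi hb0, -star (b 0), ?_⟩
  rw [mul_vecMulVec, mulVec_neg, mulVec_mulVec, Dm.mul_self, one_mulVec, star_smul,
    neg_vecMulVec, vecMulVec_smul, smul_neg, neg_smul, neg_neg, smul_smul, star_inv₀,
    mul_inv_cancel₀ (star_ne_zero.2 hb0), one_smul]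
end
end
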